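/- arXiv:1409.7533 — 3 statements merged into one kernel-verified Lean document; each statement's English description precedes it below -/
import Mathlib

section
/- For every k ≥ 1 and every permutation π of {1,…,k}, the total degree of the rectangular Stanley sum S_π(p,q) as a polynomial in p and q is at most k + κ(π). -/
open Equiv MvPolynomial

/-- The orbit of `x` under the permutation `σ`. -/
def permOrbit {k : ℕ} (σ : Equiv.Perm (Fin k)) (x : Fin k) : Set (Fin k) :=
  {y | ∃ n : ℤ, (σ ^ n) x = y}

/-- The set of orbits of a permutation (fixed points count as singleton orbits). -/
def permOrbits {k : ℕ} (σ : Equiv.Perm (Fin k)) : Set (Set (Fin k)) :=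
  Set.range (permOrbit σ)

/-- `κ(σ)`: the number of orbits (cycles, counting fixed points) of `σ`. -/
noncomputable def kappa {k : ℕ} (σ : Equiv.Perm (Fin k)) : ℕ :=
  Nat.card (permOrbits σ)

/-- The rectangular Stanley sum
`S_π(p,q) = Σ_{σ₁σ₂ = π} sgn(σ₁) q^{κ(σ₁)} p^{κ(σ₂)}` in `ℤ[p,q]`,
where `p = X 0` and `q = X 1`. -/
noncomputable def stanleySum (k : ℕ) (π : Equiv.Perm (Fin k)) : MvPolynomial (Fin 2) ℤ :=
  ∑ σ₁ : Equiv.Perm (Fin k), ∑ σ₂ : Equiv.Perm (Fin k),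
    if σ₁ * σ₂ = π then
      C ((Equiv.Perm.sign σ₁ : ℤ)) * X 1 ^ kappa σ₁ * X 0 ^ kappa σ₂
    else 0

/-!
The cycles of `σ` are the orbits of `⟨σ⟩`, so for any field `K`, `κ(σ)` is the dimension of
the space of functions `Fin k → K` that are constant on cycles, i.e. invariant under `σ`.
A function invariant under both `σ₁` and `σ₂` is invariant under `σ₁ σ₂`, and the dimension
formula for the sum and intersection of two subspaces of `Fin k → K` gives
`κ(σ₁) + κ(σ₂) ≤ k + κ(σ₁ σ₂)`. Each term of `S_π` has total degree `κ(σ₁) + κ(σ₂)` with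
`σ₁ σ₂ = π`.
-/

namespace Equiv.Perm

variable {α : Type*}

theorem SameCycle.apply_eq_of_comp_eq [Finite α] {β : Type*} {σ : Perm α} {g : α → β}
    (hg : g ∘ σ = g) {x y : α} (h : σ.SameCycle x y) : g x = g y := by
  obtain ⟨n, rfl⟩ := h.exists_nat_pow_eq
  clear h
  induction n with
  | zero => rfl
  | succ n ih =>
    rw [pow_succ', mul_apply]
    exact ih.trans (congrFun hg _).symm

variable (K : Type*) [Field K]

def invariantFunctions (σ : Perm α) : Submodule K (α → K) :=
  LinearMap.eqLocus (LinearMap.funLeft K K σ) LinearMap.id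

theorem mem_invariantFunctions {σ : Perm α} {g : α → K} :
    g ∈ invariantFunctions K σ ↔ g ∘ σ = g :=
  Iff.rfl

theorem invariantFunctions_inf_le_mul (σ τ : Perm α) :
    invariantFunctions K σ ⊓ invariantFunctions K τ ≤ invariantFunctions K (σ * τ) := by
  rintro g ⟨hσ, hτ⟩
  rw [SetLike.mem_coe, mem_invariantFunctions] at hσ hτ
  rw [mem_invariantFunctions, coe_mul, ← Function.comp_assoc, hσ, hτ]

theorem range_funLeft_quotientMk_eq_invariantFunctions [Finite α] (σ : Perm α) :
    LinearMap.range (LinearMap.funLeft K K (Quotient.mk (SameCycle.setoid σ))) =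
      invariantFunctions K σ := by
  ext g
  rw [mem_invariantFunctions]
  constructor
  · rintro ⟨f, rfl⟩
    funext x
    exact congrArg f (Quotient.sound (sameCycle_apply_left.mpr SameCycle.rfl))
  · intro hg
    exact ⟨Quotient.lift g fun x y ↦ SameCycle.apply_eq_of_comp_eq hg, rfl⟩

theorem finrank_invariantFunctions [Finite α] (σ : Perm α) :
    Module.finrank K (invariantFunctions K σ) = Nat.card (Quotient (SameCycle.setoid σ)) := by
  have := Fintype.ofFinite (Quotient (SameCycle.setoid σ))
  rw [← range_funLeft_quotientMk_eq_invariantFunctions, LinearMap.finrank_range_of_inj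
    (LinearMap.funLeft_injective_of_surjective _ _ _ Quotient.mk_surjective),
    Module.finrank_fintype_fun_eq_card, Nat.card_eq_fintype_card]

theorem card_quotient_sameCycle_add_le [Finite α] (σ τ : Perm α) :
    Nat.card (Quotient (SameCycle.setoid σ)) + Nat.card (Quotient (SameCycle.setoid τ)) ≤
      Nat.card α + Nat.card (Quotient (SameCycle.setoid (σ * τ))) := by
  have := Fintype.ofFinite α
  simp only [← finrank_invariantFunctions ℚ]
  rw [← Submodule.finrank_sup_add_finrank_inf_eq, Nat.card_eq_fintype_card,
    ← Module.finrank_fintype_fun_eq_card ℚ]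
  exact add_le_add (Submodule.finrank_le _)
    (Submodule.finrank_mono (invariantFunctions_inf_le_mul ℚ σ τ))

end Equiv.Perm

theorem permOrbits_eq_classes {k : ℕ} (σ : Perm (Fin k)) :
    permOrbits σ = (Perm.SameCycle.setoid σ).classes := by
  ext s
  constructor <;> rintro ⟨x, rfl⟩ <;> exact ⟨x, Set.ext fun _ ↦ Perm.sameCycle_comm⟩

theorem kappa_eq_card_quotient_sameCycle {k : ℕ} (σ : Perm (Fin k)) :
    kappa σ = Nat.card (Quotient (Perm.SameCycle.setoid σ)) := by
  rw [kappa, permOrbits_eq_classes]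
  exact Nat.card_congr (Setoid.quotientEquivClasses _).symm

theorem kappa_add_le {k : ℕ} (σ τ : Perm (Fin k)) : kappa σ + kappa τ ≤ k + kappa (σ * τ) := by
  simpa only [kappa_eq_card_quotient_sameCycle, Nat.card_eq_fintype_card, Fintype.card_fin]
    using Perm.card_quotient_sameCycle_add_le σ τ

theorem MvPolynomial.totalDegree_C_mul_X_pow_mul_X_pow_le {ι R : Type*} [CommSemiring R]
    (a : R) (i j : ι) (m n : ℕ) : (C a * X i ^ m * X j ^ n).totalDegree ≤ m + n := by
  rw [C_mul_X_pow_eq_monomial, X_pow_eq_monomial, monomial_mul]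
  refine (totalDegree_monomial_le _ _).trans_eq ?_
  rw [Finsupp.sum_add_index' (fun _ ↦ rfl) fun _ _ _ ↦ rfl, Finsupp.sum_single_index rfl,
    Finsupp.sum_single_index rfl]
  rfl

theorem stanleySum_totalDegree_le_general (k : ℕ) (π : Equiv.Perm (Fin k)) :
    (stanleySum k π).totalDegree ≤ k + kappa π := by
  refine (totalDegree_finsetSum _ _).trans (Finset.sup_le fun σ₁ _ ↦ ?_)
  refine (totalDegree_finsetSum _ _).trans (Finset.sup_le fun σ₂ _ ↦ ?_)
  split_ifs with h
  · rw [← h]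
    exact (totalDegree_C_mul_X_pow_mul_X_pow_le _ _ _ _ _).trans (kappa_add_le σ₁ σ₂)
  · simp

/-- The total degree of the rectangular Stanley sum `S_π(p,q)` is at most `k + κ(π)`. -/
theorem stanleySum_totalDegree_le (k : ℕ) (hk : 1 ≤ k) (π : Equiv.Perm (Fin k)) :
    (stanleySum k π).totalDegree ≤ k + kappa π :=
  stanleySum_totalDegree_le_general k π
end

section
/- Let k ≥ 1 and let σ₁, σ₂ be permutations of {1,…,k} whose product σ₁σ₂ is a k-cycle. Consider the bipartite graph whose vertex set is the disjoint union of the set of orbits of σ₁ and the set of orbits of σ₂, with an orbit c of σ₁ adjacent to an orbit d of σ₂ if and only if c ∩ d ≠ ∅ (and no edges between orbits of the same permutation). Then this graph is connected. -/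
open Equiv

/-- A full cycle: a permutation of `{1,…,k}` with a single orbit, namely everything. -/
def IsFullCycle {k : ℕ} (σ : Equiv.Perm (Fin k)) : Prop :=
  ∀ x y : Fin k, ∃ n : ℤ, (σ ^ n) x = y

/-- The bipartite graph on the disjoint union of the orbits of `σ₁` and the orbits of
`σ₂`, where an orbit of `σ₁` is adjacent to an orbit of `σ₂` iff they intersect. -/
def orbitGraph {k : ℕ} (σ₁ σ₂ : Equiv.Perm (Fin k)) :
    SimpleGraph (↥(permOrbits σ₁) ⊕ ↥(permOrbits σ₂)) where
  Adj v w :=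
    match v, w with
    | Sum.inl c, Sum.inr d => ((c : Set (Fin k)) ∩ (d : Set (Fin k))).Nonempty
    | Sum.inr d, Sum.inl c => ((c : Set (Fin k)) ∩ (d : Set (Fin k))).Nonempty
    | _, _ => False
  symm := ⟨by rintro (c | d) (c' | d') h <;> exact h⟩
  loopless := ⟨by rintro (c | d) h <;> exact h⟩

/-!
Write `τ = σ₁σ₂`. Every `x` lies in both the `σ₁`-orbit and the `σ₂`-orbit of `x`, and `σ₂ x`
lies in both the `σ₂`-orbit of `x` and the `σ₁`-orbit of `τ x`; so the `σ₁`-orbit of `x` is joined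
to that of `τ x` by a path of length two. As `τ` is a `k`-cycle, all `σ₁`-orbits lie in one
component, and every `σ₂`-orbit is adjacent to some `σ₁`-orbit.
-/

theorem SimpleGraph.reachable_of_sameCycle {α V : Type*} {G : SimpleGraph V} (f : α → V)
    {τ : Perm α} (hτ : ∀ x, G.Reachable (f x) (f (τ x))) {x y : α} (h : τ.SameCycle x y) :
    G.Reachable (f x) (f y) := by
  obtain ⟨n, rfl⟩ := h
  induction n using Int.induction_on generalizing x with
  | zero => rfl
  | succ n ih =>
    rw [zpow_add_one, Perm.mul_apply]
    exact (hτ x).trans ih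
  | pred n ih =>
    rw [zpow_sub_one, Perm.mul_apply]
    have hback : G.Reachable (f (τ⁻¹ x)) (f x) := by simpa using hτ (τ⁻¹ x)
    exact hback.symm.trans ih

lemma mem_permOrbit_self {k : ℕ} (σ : Perm (Fin k)) (x : Fin k) : x ∈ permOrbit σ x :=
  ⟨0, rfl⟩

namespace orbitGraph

variable {k : ℕ} (σ₁ σ₂ : Perm (Fin k))

def left (x : Fin k) : ↥(permOrbits σ₁) ⊕ ↥(permOrbits σ₂) :=
  Sum.inl ⟨permOrbit σ₁ x, x, rfl⟩

def right (x : Fin k) : ↥(permOrbits σ₁) ⊕ ↥(permOrbits σ₂) :=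
  Sum.inr ⟨permOrbit σ₂ x, x, rfl⟩

lemma adj_left_right (x : Fin k) : (orbitGraph σ₁ σ₂).Adj (left σ₁ σ₂ x) (right σ₁ σ₂ x) :=
  ⟨x, mem_permOrbit_self σ₁ x, mem_permOrbit_self σ₂ x⟩

lemma adj_right_left_mul_apply (x : Fin k) :
    (orbitGraph σ₁ σ₂).Adj (right σ₁ σ₂ x) (left σ₁ σ₂ ((σ₁ * σ₂) x)) :=
  ⟨σ₂ x, ⟨-1, by simp⟩, ⟨1, by simp⟩⟩

lemma reachable_left_mul_apply (x : Fin k) :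
    (orbitGraph σ₁ σ₂).Reachable (left σ₁ σ₂ x) (left σ₁ σ₂ ((σ₁ * σ₂) x)) :=
  (adj_left_right σ₁ σ₂ x).reachable.trans (adj_right_left_mul_apply σ₁ σ₂ x).reachable

lemma exists_reachable_left (v : ↥(permOrbits σ₁) ⊕ ↥(permOrbits σ₂)) :
    ∃ x, (orbitGraph σ₁ σ₂).Reachable (left σ₁ σ₂ x) v := by
  rcases v with ⟨_, x, rfl⟩ | ⟨_, x, rfl⟩
  · exact ⟨x, .rfl⟩
  · exact ⟨x, (adj_left_right σ₁ σ₂ x).reachable⟩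

end orbitGraph

/-- If `σ₁σ₂` is a `k`-cycle, then the bipartite graph between the orbits of `σ₁`
and the orbits of `σ₂` (joined when they intersect) is connected. -/
theorem orbitGraph_connected (k : ℕ) (hk : 1 ≤ k) (σ₁ σ₂ : Equiv.Perm (Fin k))
    (h : IsFullCycle (σ₁ * σ₂)) :
    (orbitGraph σ₁ σ₂).Connected := by
  let x₀ : Fin k := ⟨0, hk⟩
  refine (SimpleGraph.connected_iff_exists_forall_reachable _).mpr ⟨orbitGraph.left σ₁ σ₂ x₀, ?_⟩
  intro v
  obtain ⟨x, hx⟩ := orbitGraph.exists_reachable_left σ₁ σ₂ v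
  have hx₀x : (orbitGraph σ₁ σ₂).Reachable (orbitGraph.left σ₁ σ₂ x₀) (orbitGraph.left σ₁ σ₂ x) :=
    SimpleGraph.reachable_of_sameCycle _ (orbitGraph.reachable_left_mul_apply σ₁ σ₂) (h x₀ x)
  exact hx₀x.trans hx
end

section
/- For every k ≥ 1 and every permutation π of {1,…,k}, the rectangular Stanley sum satisfies the transposition symmetry S_π(p,q) = sgn(π) · S_π(q,p) as polynomials in ℤ[p,q] (swapping the two variables multiplies the polynomial by the sign of π). -/
open Equiv MvPolynomial

lemma conj_zpow' {k : ℕ} (π σ : Equiv.Perm (Fin k)) (n : ℤ) :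
    (π⁻¹ * σ * π) ^ n = π⁻¹ * σ ^ n * π := by
  have h : π⁻¹ * σ * π = π⁻¹ * σ * (π⁻¹)⁻¹ := by simp
  rw [h, conj_zpow]
  simp

lemma permOrbit_conj {k : ℕ} (π σ : Equiv.Perm (Fin k)) (x : Fin k) :
    permOrbit (π⁻¹ * σ * π) x = ⇑π⁻¹ '' permOrbit σ (π x) := by
  ext y
  simp only [permOrbit, Set.mem_setOf_eq, Set.mem_image]
  constructor
  · rintro ⟨n, rfl⟩
    exact ⟨(σ ^ n) (π x), ⟨n, rfl⟩, by rw [conj_zpow']; simp [Equiv.Perm.mul_apply]⟩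
  · rintro ⟨z, ⟨n, rfl⟩, rfl⟩
    exact ⟨n, by rw [conj_zpow']; simp [Equiv.Perm.mul_apply]⟩

lemma kappa_conj {k : ℕ} (π σ : Equiv.Perm (Fin k)) :
    kappa (π⁻¹ * σ * π) = kappa σ := by
  unfold kappa permOrbits
  have h : Set.range (permOrbit (π⁻¹ * σ * π)) =
      (Set.image ⇑π⁻¹) '' Set.range (permOrbit σ) := by
    ext S
    constructor
    · rintro ⟨x, rfl⟩
      exact ⟨permOrbit σ (π x), ⟨π x, rfl⟩, (permOrbit_conj π σ x).symm⟩
    · rintro ⟨T, ⟨x, rfl⟩, rfl⟩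
      exact ⟨π⁻¹ x, by rw [permOrbit_conj]; simp⟩
  rw [h]
  exact Nat.card_image_of_injective (Set.image_injective.mpr (π⁻¹).injective) _

lemma stanleySum_eq (k : ℕ) (π : Equiv.Perm (Fin k)) :
    stanleySum k π = ∑ σ : Equiv.Perm (Fin k),
      C ((Equiv.Perm.sign σ : ℤ)) * X 1 ^ kappa σ * X 0 ^ kappa (σ⁻¹ * π) := by
  unfold stanleySum
  refine Finset.sum_congr rfl fun σ₁ _ => ?_
  rw [Finset.sum_eq_single (σ₁⁻¹ * π)]
  · rw [if_pos (by group)]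
  · intro b _ hb
    rw [if_neg]
    intro h
    exact hb (by rw [← h]; group)
  · intro h; exact absurd (Finset.mem_univ _) h

/-- Transposition symmetry of the rectangular Stanley sum:
`S_π(p,q) = sgn(π) ⬝ S_π(q,p)`. -/
theorem stanleySum_swap (k : ℕ) (hk : 1 ≤ k) (π : Equiv.Perm (Fin k)) :
    stanleySum k π =
      C ((Equiv.Perm.sign π : ℤ)) *
        MvPolynomial.rename (Equiv.swap (0 : Fin 2) 1) (stanleySum k π) := by
  rw [stanleySum_eq, map_sum, Finset.mul_sum]
  refine Fintype.sum_equiv ((Equiv.inv (Equiv.Perm (Fin k))).trans (Equiv.mulRight π))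
    _ _ fun σ => ?_
  simp only [Equiv.trans_apply, Equiv.inv_apply, Equiv.coe_mulRight]
  have hκ : kappa ((σ⁻¹ * π)⁻¹ * π) = kappa σ := by
    have : (σ⁻¹ * π)⁻¹ * π = π⁻¹ * σ * π := by group
    rw [this, kappa_conj]
  have hsgn : ((Equiv.Perm.sign (σ⁻¹ * π) : ℤ)) =
      (Equiv.Perm.sign π : ℤ) * (Equiv.Perm.sign σ : ℤ) := by
    rw [map_mul, map_inv]
    push_cast
    rcases Int.units_eq_one_or (Equiv.Perm.sign σ) with h | h <;>
      rcases Int.units_eq_one_or (Equiv.Perm.sign π) with h' | h' <;>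
      simp [h, h']
  rw [map_mul, map_mul, map_pow, map_pow, rename_C, rename_X, rename_X,
    Equiv.swap_apply_left, Equiv.swap_apply_right, hκ, hsgn]
  have h1 : C ((Equiv.Perm.sign π : ℤ)) *
      C ((Equiv.Perm.sign π : ℤ) * (Equiv.Perm.sign σ : ℤ)) =
      (C ((Equiv.Perm.sign σ : ℤ)) : MvPolynomial (Fin 2) ℤ) := by
    rw [← map_mul, ← mul_assoc]
    rcases Int.units_eq_one_or (Equiv.Perm.sign π) with h | h <;> simp [h]
  linear_combination (-(X 1 ^ kappa σ * X 0 ^ kappa (σ⁻¹ * π))) * h1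
end
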